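/- Let n ≥ 2 and define G : ℝⁿ \ {0} → Cl_n by G(x) = ‖x‖^{−n} · ι(x) (the Cauchy kernel, up to a constant, of the Dirac operator). Then G is left monogenic on ℝⁿ \ {0}: for every x ∈ ℝⁿ \ {0}, ∑_{j=1}^n ι(e_j) * ∂G/∂x_j(x) = 0. -/

import Mathlib

noncomputable section

open scoped BigOperators

/-- The quadratic form `Q(v) = −‖v‖²` on `ℝⁿ` generating the Clifford
algebra `Cl_n`. -/
def Qneg (n : ℕ) : QuadraticForm ℝ (EuclideanSpace ℝ (Fin n)) :=
  -(LinearMap.BilinMap.toQuadraticMap (innerₗ (EuclideanSpace ℝ (Fin n))))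

/-!
Write `r = ‖x‖`, `k = dim E` and `ℓ` for the Clifford embedding. The derivative of
`G y = ‖y‖⁻ᵏ ℓ y` in direction `v` is `r⁻ᵏ ℓ v - k r⁻ᵏ⁻² ⟪x, v⟫ ℓ x`. Multiplying by `ℓ(bᵢ)` on
the left and summing over an orthonormal basis, the Clifford relation gives `∑ ℓ(bᵢ)² = -k`,
while `∑ ⟪x, bᵢ⟫ ℓ(bᵢ) = ℓ x` and `(ℓ x)² = -r²`; the two terms are `-k r⁻ᵏ` and `+k r⁻ᵏ`.
-/

open RealInnerProductSpace

lemma sq_rpow_neg_natCast_div_two {r : ℝ} (hr : 0 ≤ r) (k : ℕ) :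
    (r ^ 2) ^ (-(k / 2 : ℝ)) = (r ^ k)⁻¹ := by
  rw [← Real.rpow_natCast r 2, ← Real.rpow_mul hr, ← Real.rpow_natCast r k, ← Real.rpow_neg hr]
  push_cast
  ring_nf

section Dirac

variable {ι E A : Type*} [Fintype ι] [NormedAddCommGroup E] [InnerProductSpace ℝ E]
  [NormedRing A] [NormedAlgebra ℝ A]

def dirac (b : OrthonormalBasis ι ℝ E) (ℓ : E → A) (f : E → A) (x : E) : A :=
  ∑ i, ℓ (b i) * fderiv ℝ f x (b i)

theorem hasFDerivAt_inv_norm_pow {x : E} (hx : x ≠ 0) (k : ℕ) :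
    HasFDerivAt (fun y : E ↦ (‖y‖ ^ k)⁻¹) ((-(k : ℝ) * (‖x‖ ^ (k + 2))⁻¹) • innerSL ℝ x) x := by
  have h := (hasStrictFDerivAt_norm_sq x).hasFDerivAt.rpow_const (p := -(k / 2 : ℝ))
    (Or.inl (by positivity))
  convert h using 1
  · funext y
    rw [sq_rpow_neg_natCast_div_two (norm_nonneg y)]
  · have hexp : -(k / 2 : ℝ) - 1 = -(((k + 2 : ℕ) : ℝ) / 2) := by push_cast; ring
    rw [hexp, sq_rpow_neg_natCast_div_two (norm_nonneg x)]
    module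

theorem fderiv_inv_norm_pow_smul_apply (ℓ : E →L[ℝ] A) {x : E} (hx : x ≠ 0) (k : ℕ) (v : E) :
    fderiv ℝ (fun y ↦ (‖y‖ ^ k)⁻¹ • ℓ y) x v =
      (‖x‖ ^ k)⁻¹ • ℓ v - ((k : ℝ) * (‖x‖ ^ (k + 2))⁻¹ * ⟪x, v⟫) • ℓ x := by
  have h : HasFDerivAt (fun y ↦ (‖y‖ ^ k)⁻¹ • ℓ y) _ x :=
    (hasFDerivAt_inv_norm_pow hx k).smul ℓ.hasFDerivAt
  rw [h.fderiv]
  simp only [add_apply, smul_apply, ContinuousLinearMap.smulRight_apply, innerSL_apply_apply,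
    smul_eq_mul]
  rw [sub_eq_add_neg, ← neg_smul]
  congr 2
  ring

variable (b : OrthonormalBasis ι ℝ E) (ℓ : E →L[ℝ] A)

theorem sum_mul_self_eq_neg_card (hℓ : ∀ v, ℓ v * ℓ v = -(‖v‖ ^ 2) • (1 : A)) :
    ∑ i, ℓ (b i) * ℓ (b i) = -(Fintype.card ι : ℝ) • (1 : A) := by
  simp [hℓ, b.orthonormal.1, Finset.sum_const, ← Nat.cast_smul_eq_nsmul ℝ]

theorem sum_inner_smul_apply (x : E) : ∑ i, ⟪x, b i⟫ • ℓ (b i) = ℓ x := by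
  conv_rhs => rw [← b.sum_repr' x]
  simp [map_sum, map_smul, real_inner_comm]

theorem dirac_inv_norm_pow_smul_eq_zero (hℓ : ∀ v, ℓ v * ℓ v = -(‖v‖ ^ 2) • (1 : A))
    {x : E} (hx : x ≠ 0) :
    dirac b ℓ (fun y ↦ (‖y‖ ^ Fintype.card ι)⁻¹ • ℓ y) x = 0 := by
  set k := Fintype.card ι
  have hr : ‖x‖ ≠ 0 := norm_ne_zero_iff.mpr hx
  have expand : dirac b ℓ (fun y ↦ (‖y‖ ^ k)⁻¹ • ℓ y) x =
      (‖x‖ ^ k)⁻¹ • ∑ i, ℓ (b i) * ℓ (b i) -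
        ((k : ℝ) * (‖x‖ ^ (k + 2))⁻¹) • ((∑ i, ⟪x, b i⟫ • ℓ (b i)) * ℓ x) := by
    simp only [dirac, fderiv_inv_norm_pow_smul_apply ℓ hx, mul_sub, mul_smul_comm,
      Finset.sum_sub_distrib, ← Finset.smul_sum, Finset.sum_mul, smul_mul_assoc, mul_smul]
  rw [expand, sum_mul_self_eq_neg_card b ℓ hℓ, sum_inner_smul_apply, hℓ, smul_smul, smul_smul,
    ← sub_smul]
  convert zero_smul ℝ (1 : A) using 2
  field_simp
  ring

end Dirac

lemma Qneg_apply (n : ℕ) (v : EuclideanSpace ℝ (Fin n)) : Qneg n v = -(‖v‖ ^ 2) := by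
  simp only [Qneg, neg_apply, LinearMap.BilinMap.toQuadraticMap_apply,
    innerₗ_apply_apply, real_inner_self_eq_norm_sq]

lemma map_ι_Qneg_mul_self {n : ℕ} {A : Type*} [Ring A] [Algebra ℝ A]
    (φ : CliffordAlgebra (Qneg n) →ₐ[ℝ] A) (v : EuclideanSpace ℝ (Fin n)) :
    φ (CliffordAlgebra.ι (Qneg n) v) * φ (CliffordAlgebra.ι (Qneg n) v) = -(‖v‖ ^ 2) • (1 : A) := by
  rw [← map_mul, CliffordAlgebra.ι_sq_scalar, Qneg_apply, AlgHom.commutes,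
    Algebra.algebraMap_eq_smul_one]

theorem cauchy_kernel_left_monogenic_general (n : ℕ)
    (A : Type*) [NormedRing A] [NormedAlgebra ℝ A]
    (φ : CliffordAlgebra (Qneg n) ≃ₐ[ℝ] A)
    (G : EuclideanSpace ℝ (Fin n) → A)
    (hG : ∀ x, G x = (‖x‖ ^ n)⁻¹ • φ (CliffordAlgebra.ι (Qneg n) x)) :
    ∀ x : EuclideanSpace ℝ (Fin n), x ≠ 0 →
      ∑ j : Fin n, φ (CliffordAlgebra.ι (Qneg n) (EuclideanSpace.single j 1)) *
        fderiv ℝ G x (EuclideanSpace.single j 1) = 0 := by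
  intro x hx
  let ℓ := (φ.toLinearMap ∘ₗ CliffordAlgebra.ι (Qneg n)).toContinuousLinearMap
  have hG' : G = fun y ↦ (‖y‖ ^ Fintype.card (Fin n))⁻¹ • ℓ y := by
    funext y
    rw [hG, Fintype.card_fin]
    rfl
  have h := dirac_inv_norm_pow_smul_eq_zero (EuclideanSpace.basisFun (Fin n) ℝ) ℓ
    (map_ι_Qneg_mul_self φ.toAlgHom) hx
  rw [← hG', dirac] at h
  simp only [EuclideanSpace.basisFun_apply] at h
  exact h

/-- the Cauchy kernel `G(x) = ‖x‖^{−n} ι(x)` is left monogenic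
on `ℝⁿ \ {0}`: `∑_j ι(e_j) ∂G/∂x_j(x) = 0` for `x ≠ 0`.  Here `Cl_n` is
realized as a normed `ℝ`-algebra `A` via an algebra isomorphism `φ`. -/
theorem cauchy_kernel_left_monogenic (n : ℕ) (hn : 2 ≤ n)
    (A : Type*) [NormedRing A] [NormedAlgebra ℝ A]
    (φ : CliffordAlgebra (Qneg n) ≃ₐ[ℝ] A)
    (G : EuclideanSpace ℝ (Fin n) → A)
    (hG : ∀ x, G x = (‖x‖ ^ n)⁻¹ • φ (CliffordAlgebra.ι (Qneg n) x)) :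
    ∀ x : EuclideanSpace ℝ (Fin n), x ≠ 0 →
      ∑ j : Fin n, φ (CliffordAlgebra.ι (Qneg n) (EuclideanSpace.single j 1)) *
        fderiv ℝ G x (EuclideanSpace.single j 1) = 0 :=
  cauchy_kernel_left_monogenic_general n A φ G hG
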